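/- arXiv:1801.09716 — 2 statements merged into one kernel-verified Lean document; each statement's English description precedes it below -/
import Mathlib

section
/- Let S be an isometry on a complex Hilbert space H and let L be a closed S-reducing subspace of H, with P_L the orthogonal projection onto L and P^uni the orthogonal projection onto H^uni. Then the following are equivalent: (1) S is unitary on L, i.e. S(L) = L; (2) L ⊆ H^uni; (3) P_L ∘ P^uni = P_L. -/
open ContinuousLinearMap

variable {H : Type*} [NormedAddCommGroup H] [InnerProductSpace ℂ H] [CompleteSpace H]

/-- The purely isometric part `H^iso`: the closed linear span of the subspaces
`S^k (ker S*)`, `k ≥ 0`. -/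
noncomputable def Hiso (S : H →L[ℂ] H) : Submodule ℂ H :=
  (⨆ k : ℕ, Submodule.map ((S ^ k : H →L[ℂ] H) : H →ₗ[ℂ] H) (LinearMap.ker ((adjoint S : H →L[ℂ] H) : H →ₗ[ℂ] H))).topologicalClosure

/-- The unitary part `H^uni := ⋂_{k≥0} S^k (H)`. -/
noncomputable def Huni (S : H →L[ℂ] H) : Submodule ℂ H :=
  ⨅ k : ℕ, LinearMap.range ((S ^ k : H →L[ℂ] H) : H →ₗ[ℂ] H)

/-- A closed subspace `L` reduces `S` if it is invariant under `S` and `S*`. -/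
def Reduces (S : H →L[ℂ] H) (L : Submodule ℂ H) : Prop :=
  (∀ x ∈ L, S x ∈ L) ∧ ∀ x ∈ L, adjoint S x ∈ L

/-- `S` is unitary on `L`: `S` maps `L` onto `L`. -/
def UnitaryOn (S : H →L[ℂ] H) (L : Submodule ℂ H) : Prop :=
  Submodule.map (S : H →ₗ[ℂ] H) L = L

/-- `S` is a pure isometry on the `S`-invariant subspace `L`: `{0}` is the only
`S`-invariant closed subspace of `L` on which `S` is unitary. -/
def PureOn (S : H →L[ℂ] H) (L : Submodule ℂ H) : Prop :=
  ∀ M : Submodule ℂ H, IsClosed (M : Set H) → M ≤ L → Submodule.map (S : H →ₗ[ℂ] H) M = M → M = ⊥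

/-- `P` is the orthogonal projection of `H` onto the subspace `K`. -/
def IsOrthoProj (P : H →L[ℂ] H) (K : Submodule ℂ H) : Prop :=
  ∀ x, P x ∈ K ∧ x - P x ∈ Kᗮ

theorem Submodule.le_map_pow_of_le_map {R M : Type*} [Semiring R] [AddCommMonoid M] [Module R M]
    (p : Submodule R M) {f : M →ₗ[R] M} (h : p ≤ p.map f) (k : ℕ) : p ≤ p.map (f ^ k) := by
  induction k with
  | zero => simp [Module.End.one_eq_id]
  | succ k ih =>
    rw [pow_succ, Module.End.mul_eq_comp, Submodule.map_comp]
    exact ih.trans (Submodule.map_mono h)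

section

variable {E : Type*} [NormedAddCommGroup E] [InnerProductSpace ℂ E]

namespace IsOrthoProj

variable {P Q : E →L[ℂ] E} {K M : Submodule ℂ E}

theorem apply_eq_self_iff (hP : IsOrthoProj P K) {x : E} : P x = x ↔ x ∈ K := by
  refine ⟨fun h => h ▸ (hP x).1, fun hx => ?_⟩
  have hK : x - P x ∈ K := sub_mem hx (hP x).1
  exact (sub_eq_zero.mp (Submodule.disjoint_def.mp K.orthogonal_disjoint _ hK (hP x).2)).symm

theorem apply_eq_zero_iff (hP : IsOrthoProj P K) {y : E} : P y = 0 ↔ y ∈ Kᗮ := by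
  refine ⟨fun h => by simpa [h] using (hP y).2, fun hy => ?_⟩
  have hKperp : P y ∈ Kᗮ := by simpa using sub_mem hy (hP y).2
  exact Submodule.disjoint_def.mp K.orthogonal_disjoint _ (hP y).1 hKperp

theorem mul_eq_left_iff_le (hP : IsOrthoProj P K) (hQ : IsOrthoProj Q M) :
    P * Q = P ↔ K ≤ M := by
  constructor
  · intro h x hx
    have hM : x - Q x ∈ Mᗮ := (hQ x).2
    have hPQ : P (Q x) = P x := DFunLike.congr_fun h x
    have hK : x - Q x ∈ Kᗮ := by rw [← hP.apply_eq_zero_iff, map_sub, hPQ, sub_self]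
    have hxK : inner ℂ x (x - Q x) = 0 := Submodule.inner_right_of_mem_orthogonal hx hK
    have hQxM : inner ℂ (Q x) (x - Q x) = 0 := Submodule.inner_right_of_mem_orthogonal (hQ x).1 hM
    have hself : inner ℂ (x - Q x) (x - Q x) = 0 := by rw [inner_sub_left, hxK, hQxM, sub_self]
    exact hQ.apply_eq_self_iff.mp (sub_eq_zero.mp (inner_self_eq_zero.mp hself)).symm
  · intro h
    ext x
    have hx : x - Q x ∈ Kᗮ := Submodule.orthogonal_le h (hQ x).2
    rw [← hP.apply_eq_zero_iff, map_sub, sub_eq_zero] at hx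
    exact hx.symm

end IsOrthoProj

variable {S : E →L[ℂ] E} {L : Submodule ℂ E}

theorem le_huni_of_unitaryOn (h : UnitaryOn S L) : L ≤ Huni S :=
  le_iInf fun k => by
    rw [toLinearMap_pow]
    exact (L.le_map_pow_of_le_map h.ge k).trans LinearMap.map_le_range

theorem huni_le_range : Huni S ≤ LinearMap.range (S : E →ₗ[ℂ] E) :=
  (iInf_le _ 1).trans_eq (by rw [pow_one])

theorem unitaryOn_of_le_range [CompleteSpace E] (hS : adjoint S * S = 1) (hL : Reduces S L)
    (h : L ≤ LinearMap.range (S : E →ₗ[ℂ] E)) : UnitaryOn S L := by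
  refine le_antisymm (Submodule.map_le_iff_le_comap.mpr hL.1) fun x hx => ?_
  obtain ⟨y, rfl⟩ := h hx
  have hy : adjoint S (S y) = y := DFunLike.congr_fun hS y
  exact ⟨y, hy ▸ hL.2 _ hx, rfl⟩

end

theorem statement3_general (S : H →L[ℂ] H) (hS : adjoint S * S = 1)
    (L : Submodule ℂ H) (hLred : Reduces S L)
    (PL Puni : H →L[ℂ] H)
    (hPL : IsOrthoProj PL L) (hPuni : IsOrthoProj Puni (Huni S)) :
    [UnitaryOn S L, L ≤ Huni S, PL * Puni = PL].TFAE := by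
  tfae_have 1 → 2 := le_huni_of_unitaryOn
  tfae_have 2 → 1 := fun h => unitaryOn_of_le_range hS hLred (h.trans huni_le_range)
  tfae_have 2 ↔ 3 := (hPL.mul_eq_left_iff_le hPuni).symm
  tfae_finish

theorem statement3 (S : H →L[ℂ] H) (hS : adjoint S * S = 1)
    (L : Submodule ℂ H) (hLclosed : IsClosed (L : Set H)) (hLred : Reduces S L)
    (PL Puni : H →L[ℂ] H)
    (hPL : IsOrthoProj PL L) (hPuni : IsOrthoProj Puni (Huni S)) :
    [UnitaryOn S L, L ≤ Huni S, PL * Puni = PL].TFAE :=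
  statement3_general S hS L hLred PL Puni hPL hPuni
end

section
/- Let (V_1,...,V_n) be an n-tuple of doubly non-commuting isometries on a complex Hilbert space H, let A = {i_1,...,i_l} ⊆ {1,...,n} be a (possibly empty) set of l distinct indices with complement A^c = {j_1,...,j_{n−l}}, and let W_A be the A-wandering subspace. Then W_A ⊆ H_A; the subspaces V_{i_1}^{k_{i_1}} ⋯ V_{i_l}^{k_{i_l}}(W_A), for (k_{i_1},...,k_{i_l}) ∈ ℕ_0^l, are pairwise orthogonal and H_A = ⊕_{k_{i_1},...,k_{i_l} ≥ 0} V_{i_1}^{k_{i_1}} ⋯ V_{i_l}^{k_{i_l}}(W_A) as a Hilbert (orthogonal) direct sum (when A = ∅ this reads H_∅ = W_∅). Furthermore: (1) for all i ∈ A^c, W_A reduces V_i and V_i restricted to W_A is unitary, i.e. V_i(W_A) = W_A; (2) for all i,j ∈ A^c with i ≠ j, the restrictions satisfy (V_i|_{W_A})*(V_j|_{W_A}) = conj(z_{ij})(V_j|_{W_A})(V_i|_{W_A})*; (3) for all i ∈ A, V_i* vanishes on W_A; (4) for every r ∈ {1,...,l} and all k_{i_1},...,k_{i_l} ≥ 0,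 V_{i_r}(V_{i_1}^{k_{i_1}} ⋯ V_{i_r}^{k_{i_r}} ⋯ V_{i_l}^{k_{i_l}}(W_A)) = V_{i_1}^{k_{i_1}} ⋯ V_{i_r}^{k_{i_r}+1} ⋯ V_{i_l}^{k_{i_l}}(W_A). -/
open ContinuousLinearMap

variable {H : Type*} [NormedAddCommGroup H] [InnerProductSpace ℂ H] [CompleteSpace H]

/-- `(V 1, ..., V n)` is an `n`-tuple of doubly non-commuting isometries with structure
constants `z i j`: each `V i` is an isometry (`(V i)* (V i) = 1`) and
`(V i)* (V j) = conj (z i j) • (V j) (V i)*` for all `i ≠ j`. -/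
def DoublyNonCommuting {n : ℕ} (z : Fin n → Fin n → ℂ) (V : Fin n → H →L[ℂ] H) : Prop :=
  (∀ i, adjoint (V i) * V i = 1) ∧
    ∀ i j, i ≠ j →
      adjoint (V i) * V j = (starRingEnd ℂ) (z i j) • (V j * adjoint (V i))

/-- The space `H_A = ⋂_{i ∈ A} H_i^iso ∩ ⋂_{i ∈ Aᶜ} H_i^uni` (the range of the
projection `P_A`). -/
noncomputable def HA {n : ℕ} (V : Fin n → H →L[ℂ] H) (A : Finset (Fin n)) : Submodule ℂ H :=
  (⨅ i ∈ A, Hiso (V i)) ⊓ ⨅ i ∈ Aᶜ, Huni (V i)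

/-- The ordered product `V_{s 1} ^ (m (s 1)) ⋯ V_{s r} ^ (m (s r))` over a list `s` of
indices. -/
noncomputable def listProdPow {n : ℕ} (V : Fin n → H →L[ℂ] H) (s : List (Fin n))
    (m : Fin n → ℕ) : H →L[ℂ] H :=
  (s.map fun j => V j ^ m j).prod

/-- The `A`-wandering subspace
`W_A = ⋂_{m} V_{j_1}^{m_{j_1}} ⋯ V_{j_{n-l}}^{m_{j_{n-l}}} (⋂_{i ∈ A} ker (V i)*)`,
where `j_1 < ⋯ < j_{n-l}` enumerates `Aᶜ`. -/
noncomputable def WA {n : ℕ} (V : Fin n → H →L[ℂ] H) (A : Finset (Fin n)) : Submodule ℂ H :=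
  ⨅ m : Fin n → ℕ,
    Submodule.map (listProdPow V (Aᶜ.sort (· ≤ ·)) m : H →ₗ[ℂ] H)
      (⨅ i ∈ A, LinearMap.ker ((adjoint (V i) : H →L[ℂ] H) : H →ₗ[ℂ] H))

/-- The summand `V_{i_1}^{k_{i_1}} ⋯ V_{i_l}^{k_{i_l}} (W_A)` of `H_A`, where
`i_1 < ⋯ < i_l` enumerates `A`. -/
noncomputable def SummandA {n : ℕ} (V : Fin n → H →L[ℂ] H) (A : Finset (Fin n))
    (k : Fin n → ℕ) : Submodule ℂ H :=
  Submodule.map (listProdPow V (A.sort (· ≤ ·)) k : H →ₗ[ℂ] H) (WA V A)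


/-!
Any two of `V_i, V_i*, V_j, V_j*` with `i ≠ j` commute up to a nonzero scalar; for `V_i V_j` this
is because `V_i V_j` and `z_ij V_j V_i` are isometries with `(z_ij V_j V_i)* V_i V_j = 1`. Hence
every `H_j^uni`, `H_j^iso` and `ker V_j*` is invariant under the other generators and their
adjoints, the defect projections `1 - V_j V_j*` commute with them, and
`W_A = ⋂_{i ∈ A} ker V_i* ∩ ⋂_{j ∉ A} H_j^uni`, which is reduced by each `V_j`, `j ∉ A`, and lies
in its range.

Moving `V_i^{k_i}` to the front of `V^k` shows that the `k`-th summand lies in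
`V_i^{k_i} (ker V_i*)`, so the orthogonality of the summands is that of the Wold decomposition
of the single isometry `V_i`.
For density, `V_i^{*N} → 0` strongly on `H_i^iso`, so `x = Σ_m V_i^m (1 - V_i V_i*) V_i^{*m} x`
there; iterating over `i ∈ A` approximates `x ∈ H_A` by products of these projections applied to
`x`, and each such product is `V^k` composed with an operator mapping `H_A` into `W_A`.
-/

variable (𝕜 : Type*) {R : Type*} [Field 𝕜] [Ring R] [Algebra 𝕜 R] in
def QCommute (a b : R) : Prop := ∃ c : 𝕜, c ≠ 0 ∧ a * b = c • (b * a)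

section Algebra

variable {𝕜 R : Type*} [Field 𝕜] [Ring R] [Algebra 𝕜 R] {a b c : R}

theorem Commute.qcommute (h : Commute a b) : QCommute 𝕜 a b :=
  ⟨1, one_ne_zero, by rw [one_smul, h.eq]⟩

namespace QCommute

theorem refl (a : R) : QCommute 𝕜 a a := (Commute.refl a).qcommute

theorem symm (h : QCommute 𝕜 a b) : QCommute 𝕜 b a := by
  obtain ⟨c, hc, h⟩ := h
  exact ⟨c⁻¹, inv_ne_zero hc, by rw [h, smul_smul, inv_mul_cancel₀ hc, one_smul]⟩

theorem mul_right (hb : QCommute 𝕜 a b) (hc : QCommute 𝕜 a c) : QCommute 𝕜 a (b * c) := by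
  obtain ⟨s, hs, hb⟩ := hb
  obtain ⟨t, ht, hc⟩ := hc
  refine ⟨s * t, mul_ne_zero hs ht, ?_⟩
  calc a * (b * c) = s • (b * (a * c)) := by rw [← mul_assoc, hb, smul_mul_assoc, mul_assoc]
    _ = (s * t) • (b * c * a) := by rw [hc, mul_smul_comm, smul_smul, mul_assoc]

theorem mul_left (ha : QCommute 𝕜 a c) (hb : QCommute 𝕜 b c) : QCommute 𝕜 (a * b) c :=
  (ha.symm.mul_right hb.symm).symm

theorem pow_right (h : QCommute 𝕜 a b) (k : ℕ) : QCommute 𝕜 a (b ^ k) := by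
  induction k with
  | zero => rw [pow_zero]; exact (Commute.one_right a).qcommute
  | succ k ih => rw [pow_succ]; exact ih.mul_right h

theorem pow_left (h : QCommute 𝕜 a b) (k : ℕ) : QCommute 𝕜 (a ^ k) b :=
  (h.symm.pow_right k).symm

theorem list_prod_right {L : List R} (h : ∀ b ∈ L, QCommute 𝕜 a b) : QCommute 𝕜 a L.prod := by
  induction L with
  | nil => exact (Commute.one_right a).qcommute
  | cons b L ih =>
    rw [List.prod_cons]
    exact (h b List.mem_cons_self).mul_right (ih fun b' hb' => h b' (List.mem_cons_of_mem b hb'))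

theorem star [StarRing 𝕜] [StarRing R] [StarModule 𝕜 R] (h : QCommute 𝕜 a b) :
    QCommute 𝕜 (star b) (star a) := by
  obtain ⟨c, hc, h⟩ := h
  exact ⟨Star.star c, star_ne_zero.mpr hc, by rw [← star_mul, h, star_smul, star_mul]⟩

end QCommute

theorem one_sub_pow_mul_pow_eq_sum (a b : R) (N : ℕ) :
    1 - a ^ N * b ^ N = ∑ m ∈ Finset.range N, a ^ m * (1 - a * b) * b ^ m := by
  have step : ∀ m, a ^ m * (1 - a * b) * b ^ m = a ^ m * b ^ m - a ^ (m + 1) * b ^ (m + 1) := by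
    intro m
    rw [mul_sub, sub_mul, mul_one, pow_succ, pow_succ']
    simp only [mul_assoc]
  simp only [step, Finset.sum_range_sub', pow_zero, mul_one]

end Algebra

theorem CStarRing.eq_of_star_mul_eq_one {R : Type*} [NormedRing R] [StarRing R] [CStarRing R]
    {a b : R} (ha : star a * a = 1) (hb : star b * b = 1) (hab : star b * a = 1) : a = b := by
  have hba : star a * b = 1 := by simpa using congrArg star hab
  rw [← sub_eq_zero, ← CStarRing.star_mul_self_eq_zero_iff, star_sub, sub_mul, mul_sub, mul_sub,
    ha, hb, hab, hba, sub_self]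

section Operators

open Filter Topology

namespace QCommute

variable {𝕜 E : Type*} [NontriviallyNormedField 𝕜] [NormedAddCommGroup E] [NormedSpace 𝕜 E]
  {S T : E →L[𝕜] E}

theorem exists_apply (h : QCommute 𝕜 S T) : ∃ c : 𝕜, c ≠ 0 ∧ ∀ x, S (T x) = c • T (S x) := by
  obtain ⟨c, hc, h⟩ := h
  exact ⟨c, hc, fun x => by simpa only [mul_apply_eq_comp, smul_apply] using DFunLike.congr_fun h x⟩

theorem mapsTo_range (h : QCommute 𝕜 S T) :
    Set.MapsTo S (LinearMap.range (T : E →ₗ[𝕜] E)) (LinearMap.range (T : E →ₗ[𝕜] E)) := by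
  obtain ⟨c, -, hc⟩ := h.exists_apply
  rintro _ ⟨y, rfl⟩
  exact ⟨c • S y, by simp [hc]⟩

theorem mapsTo_ker (h : QCommute 𝕜 T S) :
    Set.MapsTo S (LinearMap.ker (T : E →ₗ[𝕜] E)) (LinearMap.ker (T : E →ₗ[𝕜] E)) := by
  obtain ⟨c, -, hc⟩ := h.exists_apply
  intro x (hx : T x = 0)
  show T (S x) = 0
  rw [hc, hx, map_zero, smul_zero]

end QCommute

variable {S T : H →L[ℂ] H}

omit [CompleteSpace H] in
theorem QCommute.mapsTo_Huni (h : QCommute ℂ S T) : Set.MapsTo S (Huni T) (Huni T) := by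
  intro x hx
  simp only [SetLike.mem_coe, Huni, Submodule.mem_iInf] at hx ⊢
  exact fun k => (h.pow_right k).mapsTo_range (hx k)

theorem mapsTo_Hiso_of_pow_ker
    (h : ∀ k, ∀ u ∈ LinearMap.ker (adjoint T : H →ₗ[ℂ] H), ∃ k', S ((T ^ k) u) ∈
      (LinearMap.ker (adjoint T : H →ₗ[ℂ] H)).map ((T ^ k' : H →L[ℂ] H) : H →ₗ[ℂ] H)) :
    Set.MapsTo S (Hiso T) (Hiso T) := by
  rw [Hiso, Submodule.topologicalClosure_coe]
  refine Set.MapsTo.closure (fun x hx => ?_) S.continuous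
  refine Submodule.iSup_induction _ (motive := fun x => S x ∈ _) hx ?_ ?_ ?_
  · rintro k _ ⟨u, hu, rfl⟩
    obtain ⟨k', hk'⟩ := h k u hu
    exact Submodule.mem_iSup_of_mem k' hk'
  · simp
  · intro x y hx hy
    rw [map_add]
    exact add_mem hx hy

theorem QCommute.mapsTo_Hiso (hST : QCommute ℂ S T) (hTS : QCommute ℂ (adjoint T) S) :
    Set.MapsTo S (Hiso T) (Hiso T) :=
  mapsTo_Hiso_of_pow_ker fun k u hu => by
    obtain ⟨c, -, hc⟩ := (hST.pow_right k).exists_apply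
    exact ⟨k, c • S u, Submodule.smul_mem _ c (hTS.mapsTo_ker hu), by
      rw [ContinuousLinearMap.coe_coe, map_smul, hc]⟩

theorem mapsTo_Hiso_self : Set.MapsTo T (Hiso T) (Hiso T) :=
  mapsTo_Hiso_of_pow_ker fun k u hu =>
    ⟨k + 1, u, hu, by rw [ContinuousLinearMap.coe_coe, pow_succ', mul_apply_eq_comp]⟩

theorem mem_Hiso_of_adjoint_apply_eq_zero {x : H} (hx : adjoint T x = 0) : x ∈ Hiso T :=
  Submodule.le_topologicalClosure _ (Submodule.mem_iSup_of_mem 0 ⟨x, hx, by simp⟩)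

/-- For an isometry `T`, the orthogonal projection onto `ker T*`. -/
noncomputable def defect (T : H →L[ℂ] H) : H →L[ℂ] H := 1 - T * adjoint T

theorem isClosed_Hiso (T : H →L[ℂ] H) : IsClosed (Hiso T : Set H) :=
  Submodule.isClosed_topologicalClosure _

theorem isSelfAdjoint_defect (T : H →L[ℂ] H) : IsSelfAdjoint (defect T) := by
  simp only [IsSelfAdjoint, defect, star_sub, star_one, star_mul, star_eq_adjoint, adjoint_adjoint]

theorem adjoint_pow (T : H →L[ℂ] H) (k : ℕ) : adjoint (T ^ k) = adjoint T ^ k := by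
  simp only [← star_eq_adjoint, star_pow]

section Isometry

variable (hT : adjoint T * T = 1)
include hT

theorem adjoint_mul_defect : adjoint T * defect T = 0 := by
  rw [defect, mul_sub, mul_one, ← mul_assoc, hT, one_mul, sub_self]

theorem adjoint_apply_apply (x : H) : adjoint T (T x) = x := by
  simpa using DFunLike.congr_fun hT x

theorem adjoint_pow_mul_pow (k : ℕ) : adjoint (T ^ k) * T ^ k = 1 := by
  rw [adjoint_pow]
  exact pow_mul_pow_eq_one k hT

theorem adjoint_pow_apply_pow_apply (k : ℕ) (x : H) : (adjoint T ^ k) ((T ^ k) x) = x := by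
  rw [← adjoint_pow]
  exact adjoint_apply_apply (adjoint_pow_mul_pow hT k) x

theorem apply_adjoint_apply_of_mem_range {x : H} (hx : x ∈ LinearMap.range (T : H →ₗ[ℂ] H)) :
    T (adjoint T x) = x := by
  obtain ⟨y, rfl⟩ := hx
  simp [adjoint_apply_apply hT]

theorem norm_apply_of_adjoint_mul_self_eq_one (x : H) : ‖T x‖ = ‖x‖ :=
  (norm_map_iff_adjoint_comp_self T).mpr hT x

theorem inner_apply_apply (x y : H) : inner ℂ (T x) (T y) = inner ℂ x y :=
  (inner_map_map_iff_adjoint_comp_self T).mpr hT x y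

theorem mapsTo_Huni_adjoint : Set.MapsTo (adjoint T) (Huni T) (Huni T) := by
  intro x hx
  simp only [SetLike.mem_coe, Huni, Submodule.mem_iInf] at hx ⊢
  intro k
  obtain ⟨y, hy⟩ := hx (k + 1)
  refine ⟨y, ?_⟩
  simp only [ContinuousLinearMap.coe_coe, pow_succ', mul_apply_eq_comp] at hy ⊢
  rw [← hy, adjoint_apply_apply hT]

theorem isClosed_Huni : IsClosed (Huni T : Set H) := by
  rw [Huni, Submodule.coe_iInf]
  refine isClosed_iInter fun k => ?_
  rw [LinearMap.coe_range, ContinuousLinearMap.coe_coe]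
  exact (AddMonoidHomClass.isometry_of_norm _ (norm_apply_of_adjoint_mul_self_eq_one
    (adjoint_pow_mul_pow hT k))).isClosedEmbedding.isClosed_range

theorem tendsto_adjoint_pow_apply_of_mem_Hiso {x : H} (hx : x ∈ Hiso T) :
    Tendsto (fun N => (adjoint T ^ N) x) atTop (𝓝 0) := by
  have hbound : ∀ N, ‖adjoint T ^ N‖ ≤ 1 := fun N => by
    rw [← adjoint_pow, adjoint.norm_map]
    exact opNorm_le_bound _ zero_le_one fun y => by
      rw [norm_apply_of_adjoint_mul_self_eq_one (adjoint_pow_mul_pow hT N), one_mul]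
  have hequi : Equicontinuous ((↑) ∘ fun N : ℕ => adjoint T ^ N) :=
    ((NormedSpace.equicontinuous_TFAE _).out 5 1).mp
      (⟨1, hbound⟩ : ∃ C, ∀ N : ℕ, ‖adjoint T ^ N‖ ≤ C)
  have hclosed : IsClosed {y : H | Tendsto (fun N => (adjoint T ^ N) y) atTop (𝓝 0)} :=
    hequi.isClosed_setOfPred_tendsto continuous_const
  rw [← SetLike.mem_coe, Hiso, Submodule.topologicalClosure_coe] at hx
  refine closure_minimal (fun y hy => ?_) hclosed hx
  rw [SetLike.mem_coe] at hy
  refine Submodule.iSup_induction _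
    (motive := fun y => Tendsto (fun N => (adjoint T ^ N) y) atTop (𝓝 0)) hy ?_ ?_ ?_
  · rintro k _ ⟨u, hu, rfl⟩
    refine tendsto_const_nhds.congr' ((eventually_gt_atTop k).mono fun N hN => ?_)
    obtain ⟨r, rfl⟩ : ∃ r, N = r + 1 + k := ⟨N - (k + 1), by omega⟩
    have hu : adjoint T u = 0 := hu
    show 0 = (adjoint T ^ (r + 1 + k)) ((T ^ k) u)
    rw [pow_add, mul_apply_eq_comp, adjoint_pow_apply_pow_apply hT, pow_succ, mul_apply_eq_comp,
      hu, map_zero]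
  · simp
  · intro y z hy hz
    simpa using hy.add hz

theorem mem_closure_span_of_mem_Hiso {x : H} (hx : x ∈ Hiso T) :
    x ∈ (Submodule.span ℂ
      (Set.range fun m => (T ^ m * defect T * adjoint T ^ m) x)).topologicalClosure := by
  have hpartial : ∀ N, x - (T ^ N) ((adjoint T ^ N) x) =
      ∑ m ∈ Finset.range N, (T ^ m * defect T * adjoint T ^ m) x := fun N => by
    rw [← _root_.sum_apply, defect, ← one_sub_pow_mul_pow_eq_sum]
    rw [sub_apply, one_apply_eq_self, mul_apply_eq_comp]
  have hsmall : Tendsto (fun N => (T ^ N) ((adjoint T ^ N) x)) atTop (𝓝 0) := by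
    rw [tendsto_zero_iff_norm_tendsto_zero]
    refine (tendsto_zero_iff_norm_tendsto_zero.mp
      (tendsto_adjoint_pow_apply_of_mem_Hiso hT hx)).congr fun N => ?_
    rw [norm_apply_of_adjoint_mul_self_eq_one (adjoint_pow_mul_pow hT N)]
  rw [← SetLike.mem_coe, Submodule.topologicalClosure_coe]
  have hlim : Tendsto (fun N => x - (T ^ N) ((adjoint T ^ N) x)) atTop (𝓝 x) := by
    simpa only [sub_zero] using tendsto_const_nhds.sub hsmall
  refine mem_closure_of_tendsto hlim (Eventually.of_forall fun N => ?_)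
  rw [SetLike.mem_coe, hpartial]
  exact Submodule.sum_mem _ fun m _ => Submodule.subset_span ⟨m, rfl⟩

theorem isOrtho_map_pow_ker_adjoint {p q : ℕ} (hpq : p ≠ q) :
    (LinearMap.ker (adjoint T : H →ₗ[ℂ] H)).map ((T ^ p : H →L[ℂ] H) : H →ₗ[ℂ] H) ⟂
      (LinearMap.ker (adjoint T : H →ₗ[ℂ] H)).map ((T ^ q : H →L[ℂ] H) : H →ₗ[ℂ] H) := by
  wlog hlt : p < q generalizing p q
  · exact (this hpq.symm (by omega)).symm
  obtain ⟨d, rfl⟩ := Nat.exists_eq_add_of_lt hlt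
  rw [Submodule.isOrtho_iff_inner_eq]
  rintro _ ⟨u, hu, rfl⟩ _ ⟨v, -, rfl⟩
  have hu : adjoint T u = 0 := hu
  simp only [ContinuousLinearMap.coe_coe]
  rw [add_assoc, pow_add, mul_apply_eq_comp, inner_apply_apply (adjoint_pow_mul_pow hT p),
    pow_succ', mul_apply_eq_comp, ← adjoint_inner_left, hu, inner_zero_left]

end Isometry

end Operators
section MapsTo

variable {R E : Type*} [Semiring R] [TopologicalSpace E] [AddCommMonoid E] [Module R E]
  {S T : E →L[R] E} {K : Set E}

theorem Set.MapsTo.clm_mul (hS : Set.MapsTo S K K) (hT : Set.MapsTo T K K) :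
    Set.MapsTo (S * T) K K := fun x hx => by
  rw [mul_apply_eq_comp]
  exact hS (hT hx)

theorem Set.MapsTo.clm_pow (h : Set.MapsTo T K K) (k : ℕ) : Set.MapsTo (T ^ k) K K := by
  rw [FunLike.coe_pow_eq_iterate]
  exact h.iterate k

theorem Set.MapsTo.clm_list_prod {L : List (E →L[R] E)} (h : ∀ T ∈ L, Set.MapsTo T K K) :
    Set.MapsTo L.prod K K := by
  induction L with
  | nil => exact Set.mapsTo_id K
  | cons T L ih =>
    rw [List.prod_cons]
    exact (h T List.mem_cons_self).clm_mul (ih fun T' hT' => h T' (List.mem_cons_of_mem T hT'))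

end MapsTo

section DoublyNonCommuting

variable {n : ℕ} {z : Fin n → Fin n → ℂ} {V : Fin n → H →L[ℂ] H}
  (hz1 : ∀ i j, i ≠ j → ‖z i j‖ = 1) (hV : DoublyNonCommuting z V)

include hz1 in
theorem conj_mul_self_eq_one {i j : Fin n} (h : i ≠ j) :
    starRingEnd ℂ (z i j) * z i j = 1 := by
  rw [Complex.conj_mul', hz1 i j h]
  norm_num

include hz1 in
theorem z_ne_zero {i j : Fin n} (h : i ≠ j) : z i j ≠ 0 := by
  rintro h0
  simpa [h0] using hz1 i j h

include hV in
theorem adjoint_V_mul_V {i j : Fin n} (h : i ≠ j) :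
    adjoint (V j) * V i = z i j • (V i * adjoint (V j)) := by
  simpa only [star_mul, star_smul, star_eq_adjoint, adjoint_adjoint, Complex.star_def,
    Complex.conj_conj] using congrArg star (hV.2 i j h)

include hz1 hV in
theorem V_mul_V {i j : Fin n} (h : i ≠ j) : V i * V j = z i j • (V j * V i) := by
  have cancel : ∀ l (X : H →L[ℂ] H), adjoint (V l) * (V l * X) = X := fun l X => by
    rw [← mul_assoc, hV.1 l, one_mul]
  refine CStarRing.eq_of_star_mul_eq_one ?_ ?_ ?_
  · simp only [star_mul, star_eq_adjoint, mul_assoc, cancel, hV.1 j]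
  · simp only [star_smul, star_mul, star_eq_adjoint, smul_mul_smul_comm, mul_assoc, cancel,
      hV.1 i, Complex.star_def, conj_mul_self_eq_one hz1 h, one_smul]
  · simp only [star_smul, star_mul, star_eq_adjoint, smul_mul_assoc, mul_assoc]
    rw [← mul_assoc (adjoint (V j)), adjoint_V_mul_V hV h, smul_mul_assoc, mul_smul_comm,
      smul_smul, mul_assoc, hV.1 j, mul_one, hV.1 i, Complex.star_def,
      conj_mul_self_eq_one hz1 h, one_smul]

include hz1 hV in
theorem V_mul_adjoint_V {i j : Fin n} (h : i ≠ j) :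
    V i * adjoint (V j) = starRingEnd ℂ (z i j) • (adjoint (V j) * V i) := by
  rw [adjoint_V_mul_V hV h, smul_smul, conj_mul_self_eq_one hz1 h, one_smul]

include hz1 hV in
theorem qcommute_adjoint_V {i j : Fin n} (h : i ≠ j) :
    QCommute ℂ (adjoint (V i)) (V j) :=
  ⟨_, (map_ne_zero _).mpr (z_ne_zero hz1 h), hV.2 i j h⟩

include hz1 hV in
theorem qcommute_V_V {i j : Fin n} (h : i ≠ j) : QCommute ℂ (V i) (V j) :=
  ⟨_, z_ne_zero hz1 h, V_mul_V hz1 hV h⟩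

include hz1 hV in
theorem qcommute_adjoint_adjoint {i j : Fin n} (h : i ≠ j) :
    QCommute ℂ (adjoint (V i)) (adjoint (V j)) := by
  simpa only [star_eq_adjoint] using (qcommute_V_V hz1 hV h.symm).star

include hz1 hV in
theorem commute_V_defect {i j : Fin n} (h : i ≠ j) : Commute (V i) (defect (V j)) := by
  refine (Commute.one_right _).sub_right ?_
  calc V i * (V j * adjoint (V j)) = z i j • (V j * (V i * adjoint (V j))) := by
        rw [← mul_assoc, V_mul_V hz1 hV h, smul_mul_assoc, mul_assoc]
    _ = (starRingEnd ℂ (z i j) * z i j) • (V j * adjoint (V j) * V i) := by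
        rw [V_mul_adjoint_V hz1 hV h, mul_smul_comm, smul_smul, mul_comm, mul_assoc]
    _ = V j * adjoint (V j) * V i := by rw [conj_mul_self_eq_one hz1 h, one_smul]

include hz1 hV in
theorem commute_adjoint_defect {i j : Fin n} (h : i ≠ j) :
    Commute (adjoint (V i)) (defect (V j)) := by
  simpa only [star_eq_adjoint, (isSelfAdjoint_defect _).star_eq] using
    (commute_V_defect hz1 hV h).star_star

include hz1 hV in
theorem mapsTo_Huni_V (i j : Fin n) : Set.MapsTo (V i) (Huni (V j)) (Huni (V j)) := by
  rcases eq_or_ne i j with rfl | h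
  · exact (QCommute.refl _).mapsTo_Huni
  · exact (qcommute_V_V hz1 hV h).mapsTo_Huni

include hz1 hV in
theorem mapsTo_Huni_adjoint_V (i j : Fin n) :
    Set.MapsTo (adjoint (V i)) (Huni (V j)) (Huni (V j)) := by
  rcases eq_or_ne i j with rfl | h
  · exact mapsTo_Huni_adjoint (hV.1 i)
  · exact (qcommute_adjoint_V hz1 hV h).mapsTo_Huni

include hz1 hV in
theorem mapsTo_Huni_defect {i j : Fin n} (h : i ≠ j) :
    Set.MapsTo (defect (V i)) (Huni (V j)) (Huni (V j)) :=
  (commute_V_defect hz1 hV h.symm).symm.qcommute.mapsTo_Huni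

include hz1 hV in
theorem mapsTo_Hiso_V (i j : Fin n) : Set.MapsTo (V i) (Hiso (V j)) (Hiso (V j)) := by
  rcases eq_or_ne i j with rfl | h
  · exact mapsTo_Hiso_self
  · exact (qcommute_V_V hz1 hV h).mapsTo_Hiso (qcommute_adjoint_V hz1 hV h.symm)

include hz1 hV in
theorem mapsTo_Hiso_adjoint_V {i j : Fin n} (h : i ≠ j) :
    Set.MapsTo (adjoint (V i)) (Hiso (V j)) (Hiso (V j)) :=
  (qcommute_adjoint_V hz1 hV h).mapsTo_Hiso (qcommute_adjoint_adjoint hz1 hV h.symm)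

include hz1 hV in
theorem mapsTo_Hiso_defect {i j : Fin n} (h : i ≠ j) :
    Set.MapsTo (defect (V i)) (Hiso (V j)) (Hiso (V j)) :=
  (commute_V_defect hz1 hV h.symm).symm.qcommute.mapsTo_Hiso
    (commute_adjoint_defect hz1 hV h.symm).qcommute

omit [CompleteSpace H] in
theorem listProdPow_cons (a : Fin n) (s : List (Fin n)) (m : Fin n → ℕ) :
    listProdPow V (a :: s) m = V a ^ m a * listProdPow V s m :=
  rfl

omit [CompleteSpace H] in
theorem mapsTo_listProdPow {K : Set H} {s : List (Fin n)} (m : Fin n → ℕ)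
    (hK : ∀ j ∈ s, Set.MapsTo (V j) K K) : Set.MapsTo (listProdPow V s m) K K :=
  Set.MapsTo.clm_list_prod fun T hT => by
    obtain ⟨j, hj, rfl⟩ := List.mem_map.mp hT
    exact (hK j hj).clm_pow (m j)

omit [CompleteSpace H] in
theorem qcommute_listProdPow {X : H →L[ℂ] H} {s : List (Fin n)} (m : Fin n → ℕ)
    (h : ∀ j ∈ s, QCommute ℂ X (V j)) : QCommute ℂ X (listProdPow V s m) :=
  QCommute.list_prod_right fun T hT => by
    obtain ⟨j, hj, rfl⟩ := List.mem_map.mp hT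
    exact (h j hj).pow_right (m j)

include hz1 hV in
theorem listProdPow_eq_smul_pow_mul_erase {s : List (Fin n)} {i : Fin n} (hi : i ∈ s)
    (m : Fin n → ℕ) :
    ∃ c : ℂ, c ≠ 0 ∧ listProdPow V s m = c • (V i ^ m i * listProdPow V (s.erase i) m) := by
  induction s with
  | nil => simp at hi
  | cons a t ih =>
    rcases eq_or_ne a i with rfl | hai
    · exact ⟨1, one_ne_zero, by rw [List.erase_cons_head, one_smul, listProdPow_cons]⟩
    · obtain ⟨c, hc, hct⟩ := ih ((List.mem_cons.mp hi).resolve_left hai.symm)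
      obtain ⟨c', hc', hcomm⟩ := ((qcommute_V_V hz1 hV hai).pow_left (m a)).pow_right (m i)
      refine ⟨c * c', mul_ne_zero hc hc', ?_⟩
      rw [List.erase_cons_tail (by simpa using hai), listProdPow_cons, listProdPow_cons, hct,
        mul_smul_comm, ← mul_assoc, hcomm, smul_mul_assoc, smul_smul, mul_assoc]

include hz1 hV in
theorem listProdPow_update_eq_smul_mul {s : List (Fin n)} (hs : s.Nodup) {i : Fin n} (hi : i ∈ s)
    (m : Fin n → ℕ) : ∃ c : ℂ, c ≠ 0 ∧
      listProdPow V s (Function.update m i (m i + 1)) = c • (V i * listProdPow V s m) := by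
  obtain ⟨c, hc, hup⟩ := listProdPow_eq_smul_pow_mul_erase hz1 hV hi (Function.update m i (m i + 1))
  obtain ⟨c', hc', h⟩ := listProdPow_eq_smul_pow_mul_erase hz1 hV hi m
  have herase : listProdPow V (s.erase i) (Function.update m i (m i + 1)) =
      listProdPow V (s.erase i) m := by
    refine congrArg List.prod (List.map_congr_left fun j hj => ?_)
    rw [Function.update_of_ne ((hs.mem_erase_iff.mp hj).1)]
  refine ⟨c * c'⁻¹, mul_ne_zero hc (inv_ne_zero hc'), ?_⟩
  rw [hup, herase, Function.update_self, pow_succ', mul_assoc, h, mul_smul_comm, smul_smul,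
    inv_mul_cancel_right₀ hc']

def wanderingSet (V : Fin n → H →L[ℂ] H) (A : Finset (Fin n)) : Set H :=
  {x | (∀ i ∈ A, adjoint (V i) x = 0) ∧ ∀ j ∉ A, x ∈ Huni (V j)}

include hz1 hV in
theorem mapsTo_wanderingSet_V {A : Finset (Fin n)} {i : Fin n} (hi : i ∉ A) :
    Set.MapsTo (V i) (wanderingSet V A) (wanderingSet V A) := fun _ hx =>
  ⟨fun l hl => (qcommute_adjoint_V hz1 hV (ne_of_mem_of_not_mem hl hi)).mapsTo_ker (hx.1 l hl),
    fun j hj => mapsTo_Huni_V hz1 hV i j (hx.2 j hj)⟩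

include hz1 hV in
theorem mapsTo_wanderingSet_adjoint_V {A : Finset (Fin n)} {i : Fin n} (hi : i ∉ A) :
    Set.MapsTo (adjoint (V i)) (wanderingSet V A) (wanderingSet V A) := fun _ hx =>
  ⟨fun l hl =>
      (qcommute_adjoint_adjoint hz1 hV (ne_of_mem_of_not_mem hl hi)).mapsTo_ker (hx.1 l hl),
    fun j hj => mapsTo_Huni_adjoint_V hz1 hV i j (hx.2 j hj)⟩

theorem subset_image_listProdPow (hisom : ∀ j, adjoint (V j) * V j = 1) {U : Set H}
    {s : List (Fin n)} (m : Fin n → ℕ)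
    (hU : ∀ j ∈ s, Set.MapsTo (adjoint (V j)) U U ∧ U ⊆ Huni (V j)) :
    U ⊆ listProdPow V s m '' U := by
  induction s with
  | nil => exact fun x hx => ⟨x, hx, by simp [listProdPow]⟩
  | cons a t ih =>
    intro x hx
    obtain ⟨hadj, huni⟩ := hU a List.mem_cons_self
    obtain ⟨v, hv, hvx⟩ :=
      ih (fun j hj => hU j (List.mem_cons_of_mem a hj)) (hadj.clm_pow (m a) hx)
    refine ⟨v, hv, ?_⟩
    rw [listProdPow_cons, mul_apply_eq_comp, hvx, ← adjoint_pow,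
      apply_adjoint_apply_of_mem_range (adjoint_pow_mul_pow (hisom a) (m a))
        ((Submodule.mem_iInf _).mp (huni hx) (m a))]

include hz1 hV in
theorem coe_WA (A : Finset (Fin n)) : (WA V A : Set H) = wanderingSet V A := by
  ext x
  simp only [SetLike.mem_coe, WA, Submodule.mem_iInf]
  constructor
  · intro hx
    refine ⟨fun i hi => ?_, fun j hj => (Submodule.mem_iInf _).mpr fun p => ?_⟩
    · obtain ⟨u, hu, rfl⟩ := hx 0
      have hP : listProdPow V (Aᶜ.sort (· ≤ ·)) 0 = 1 := by simp [listProdPow]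
      simpa [hP] using (Submodule.mem_iInf _).mp ((Submodule.mem_iInf _).mp hu i) hi
    · obtain ⟨u, -, rfl⟩ := hx fun _ => p
      obtain ⟨c, -, hc⟩ := listProdPow_eq_smul_pow_mul_erase hz1 hV
        ((Finset.mem_sort (· ≤ ·)).mpr (Finset.mem_compl.mpr hj)) fun _ => p
      exact ⟨c • listProdPow V ((Aᶜ.sort (· ≤ ·)).erase j) (fun _ => p) u, by simp [hc]⟩
  · intro hx m
    obtain ⟨u, hu, rfl⟩ := subset_image_listProdPow hV.1 m
      (U := wanderingSet V A) (s := Aᶜ.sort (· ≤ ·))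
      (fun j hj =>
        have hj : j ∉ A := Finset.mem_compl.mp ((Finset.mem_sort _).mp hj)
        ⟨mapsTo_wanderingSet_adjoint_V hz1 hV hj, fun y hy => hy.2 j hj⟩) hx
    exact ⟨u, by simpa [Submodule.mem_iInf] using hu.1, rfl⟩

include hz1 hV in
theorem mapsTo_WA_V {A : Finset (Fin n)} {i : Fin n} (hi : i ∉ A) :
    Set.MapsTo (V i) (WA V A) (WA V A) := by
  rw [coe_WA hz1 hV]
  exact mapsTo_wanderingSet_V hz1 hV hi

include hz1 hV in
theorem mapsTo_WA_adjoint_V {A : Finset (Fin n)} {i : Fin n} (hi : i ∉ A) :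
    Set.MapsTo (adjoint (V i)) (WA V A) (WA V A) := by
  rw [coe_WA hz1 hV]
  exact mapsTo_wanderingSet_adjoint_V hz1 hV hi

include hz1 hV in
theorem map_V_WA {A : Finset (Fin n)} {i : Fin n} (hi : i ∉ A) :
    (WA V A).map (V i : H →ₗ[ℂ] H) = WA V A := by
  refine le_antisymm (Submodule.map_le_iff_le_comap.mpr fun x hx => mapsTo_WA_V hz1 hV hi hx)
    fun x hx => ⟨adjoint (V i) x, mapsTo_WA_adjoint_V hz1 hV hi hx, ?_⟩
  rw [← SetLike.mem_coe, coe_WA hz1 hV] at hx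
  rw [ContinuousLinearMap.coe_coe]
  exact apply_adjoint_apply_of_mem_range (hV.1 i)
    (by simpa using (Submodule.mem_iInf _).mp (hx.2 i hi) 1)

include hz1 hV in
theorem adjoint_V_apply_eq_zero_of_mem_WA {A : Finset (Fin n)} {i : Fin n} (hi : i ∈ A) {x : H}
    (hx : x ∈ WA V A) : adjoint (V i) x = 0 := by
  rw [← SetLike.mem_coe, coe_WA hz1 hV] at hx
  exact hx.1 i hi

theorem mem_HA_iff {A : Finset (Fin n)} {x : H} :
    x ∈ HA V A ↔ (∀ i ∈ A, x ∈ Hiso (V i)) ∧ ∀ j ∉ A, x ∈ Huni (V j) := by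
  simp [HA, Submodule.mem_iInf]

include hz1 hV in
theorem WA_le_HA (A : Finset (Fin n)) : WA V A ≤ HA V A := fun x hx => by
  rw [← SetLike.mem_coe, coe_WA hz1 hV] at hx
  exact mem_HA_iff.mpr ⟨fun i hi => mem_Hiso_of_adjoint_apply_eq_zero (hx.1 i hi), hx.2⟩

include hz1 hV in
theorem mapsTo_HA_V (A : Finset (Fin n)) (l : Fin n) : Set.MapsTo (V l) (HA V A) (HA V A) :=
  fun x hx => by
    rw [SetLike.mem_coe, mem_HA_iff] at hx ⊢
    exact ⟨fun i hi => mapsTo_Hiso_V hz1 hV l i (hx.1 i hi),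
      fun j hj => mapsTo_Huni_V hz1 hV l j (hx.2 j hj)⟩

include hz1 hV in
theorem SummandA_le_HA (A : Finset (Fin n)) (k : Fin n → ℕ) : SummandA V A k ≤ HA V A := by
  rintro _ ⟨w, hw, rfl⟩
  exact mapsTo_listProdPow k (fun l _ => mapsTo_HA_V hz1 hV A l) (WA_le_HA hz1 hV A hw)

include hV in
theorem isClosed_HA (A : Finset (Fin n)) : IsClosed (HA V A : Set H) := by
  simp only [HA, Submodule.coe_inf, Submodule.coe_iInf]
  exact (isClosed_iInter fun i => isClosed_iInter fun _ => isClosed_Hiso _).inter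
    (isClosed_iInter fun j => isClosed_iInter fun _ => isClosed_Huni (hV.1 j))

include hz1 hV in
theorem SummandA_le_map_pow_ker {A : Finset (Fin n)} {i : Fin n} (hi : i ∈ A) (k : Fin n → ℕ) :
    SummandA V A k ≤ (LinearMap.ker (adjoint (V i) : H →ₗ[ℂ] H)).map
      ((V i ^ k i : H →L[ℂ] H) : H →ₗ[ℂ] H) := by
  rintro _ ⟨w, hw, rfl⟩
  have hs := Finset.sort_nodup A (· ≤ ·)
  obtain ⟨c, -, hc⟩ := listProdPow_eq_smul_pow_mul_erase hz1 hV ((Finset.mem_sort (· ≤ ·)).mpr hi) k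
  have hker : listProdPow V ((A.sort (· ≤ ·)).erase i) k w ∈
      LinearMap.ker (adjoint (V i) : H →ₗ[ℂ] H) :=
    mapsTo_listProdPow k
      (fun l hl => (qcommute_adjoint_V hz1 hV (hs.mem_erase_iff.mp hl).1.symm).mapsTo_ker)
      (adjoint_V_apply_eq_zero_of_mem_WA hz1 hV hi hw)
  exact ⟨c • _, Submodule.smul_mem _ c hker, by simp [hc]⟩

include hz1 hV in
theorem SummandA_isOrtho {A : Finset (Fin n)} {k k' : Fin n → ℕ} (h : ∃ i ∈ A, k i ≠ k' i) :
    SummandA V A k ⟂ SummandA V A k' := by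
  obtain ⟨i, hi, hne⟩ := h
  exact (isOrtho_map_pow_ker_adjoint (hV.1 i) hne).mono (SummandA_le_map_pow_ker hz1 hV hi k)
    (SummandA_le_map_pow_ker hz1 hV hi k')

include hz1 hV in
theorem map_V_SummandA {A : Finset (Fin n)} {r : Fin n} (hr : r ∈ A) (k : Fin n → ℕ) :
    (SummandA V A k).map (V r : H →ₗ[ℂ] H) = SummandA V A (Function.update k r (k r + 1)) := by
  obtain ⟨c, hc, hP⟩ := listProdPow_update_eq_smul_mul hz1 hV (Finset.sort_nodup A (· ≤ ·))
    ((Finset.mem_sort (· ≤ ·)).mpr hr) k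
  rw [SummandA, SummandA, hP, ContinuousLinearMap.toLinearMap_smul, Submodule.map_smul _ _ _ hc,
    ContinuousLinearMap.toLinearMap_mul, Module.End.mul_eq_comp, Submodule.map_comp]

/-- The product of the projections onto `V_i^{k_i} (ker V_i*)`, `i ∈ s`. -/
noncomputable def wanderingProj (V : Fin n → H →L[ℂ] H) (s : List (Fin n)) (k : Fin n → ℕ) :
    H →L[ℂ] H :=
  (s.map fun i => V i ^ k i * defect (V i) * adjoint (V i) ^ k i).prod

noncomputable def defectProd (V : Fin n → H →L[ℂ] H) (s : List (Fin n)) (k : Fin n → ℕ) :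
    H →L[ℂ] H :=
  (s.map fun i => defect (V i) * adjoint (V i) ^ k i).prod

theorem wanderingProj_cons (a : Fin n) (s : List (Fin n)) (k : Fin n → ℕ) :
    wanderingProj V (a :: s) k =
      V a ^ k a * defect (V a) * adjoint (V a) ^ k a * wanderingProj V s k :=
  rfl

theorem defectProd_cons (a : Fin n) (s : List (Fin n)) (k : Fin n → ℕ) :
    defectProd V (a :: s) k = defect (V a) * adjoint (V a) ^ k a * defectProd V s k :=
  rfl

include hz1 hV in
theorem wanderingProj_eq_smul {s : List (Fin n)} (hs : s.Nodup) (k : Fin n → ℕ) :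
    ∃ c : ℂ, c ≠ 0 ∧ wanderingProj V s k = c • (listProdPow V s k * defectProd V s k) := by
  induction s with
  | nil => exact ⟨1, one_ne_zero, by simp [wanderingProj, defectProd, listProdPow]⟩
  | cons a t ih =>
    obtain ⟨hat, ht⟩ := List.nodup_cons.mp hs
    obtain ⟨c, hc, hct⟩ := ih ht
    obtain ⟨c', hc', hcomm⟩ :
        QCommute ℂ (defect (V a) * adjoint (V a) ^ k a) (listProdPow V t k) :=
      qcommute_listProdPow k fun l hl =>
        have hla : l ≠ a := fun h => hat (h ▸ hl)
        (commute_V_defect hz1 hV hla).symm.qcommute.mul_left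
          ((qcommute_adjoint_V hz1 hV hla.symm).pow_left (k a))
    refine ⟨c * c', mul_ne_zero hc hc', ?_⟩
    calc wanderingProj V (a :: t) k
        = c • (V a ^ k a * ((defect (V a) * adjoint (V a) ^ k a) * listProdPow V t k) *
            defectProd V t k) := by
          rw [wanderingProj_cons, hct]
          simp only [mul_smul_comm, mul_assoc]
      _ = (c * c') • (listProdPow V (a :: t) k * defectProd V (a :: t) k) := by
          rw [hcomm, listProdPow_cons, defectProd_cons]
          simp only [mul_smul_comm, smul_mul_assoc, smul_smul, mul_assoc]

include hz1 hV in
theorem adjoint_V_mul_defectProd {s : List (Fin n)} {i : Fin n} (hi : i ∈ s) (k : Fin n → ℕ) :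
    adjoint (V i) * defectProd V s k = 0 := by
  induction s with
  | nil => simp at hi
  | cons a t ih =>
    rw [defectProd_cons]
    rcases eq_or_ne a i with rfl | hai
    · rw [← mul_assoc, ← mul_assoc, adjoint_mul_defect (hV.1 a), zero_mul, zero_mul]
    · obtain ⟨c, -, hc⟩ : QCommute ℂ (adjoint (V i)) (defect (V a) * adjoint (V a) ^ k a) :=
        (commute_adjoint_defect hz1 hV hai.symm).qcommute.mul_right
          ((qcommute_adjoint_adjoint hz1 hV hai.symm).pow_right (k a))
      rw [← mul_assoc, hc, smul_mul_assoc, mul_assoc,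
        ih ((List.mem_cons.mp hi).resolve_left hai.symm), mul_zero, smul_zero]

include hz1 hV in
theorem defectProd_apply_mem_WA {A : Finset (Fin n)} {x : H} (hx : x ∈ HA V A)
    (k : Fin n → ℕ) : defectProd V (A.sort (· ≤ ·)) k x ∈ WA V A := by
  rw [← SetLike.mem_coe, coe_WA hz1 hV]
  refine ⟨fun i hi => ?_, fun j hj => ?_⟩
  · simpa only [mul_apply_eq_comp, zero_apply] using DFunLike.congr_fun
      (adjoint_V_mul_defectProd hz1 hV ((Finset.mem_sort (· ≤ ·)).mpr hi) k) x
  · refine Set.MapsTo.clm_list_prod (fun T hT => ?_) ((mem_HA_iff.mp hx).2 j hj)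
    obtain ⟨a, ha, rfl⟩ := List.mem_map.mp hT
    have haj : a ≠ j := ne_of_mem_of_not_mem ((Finset.mem_sort (· ≤ ·)).mp ha) hj
    exact (mapsTo_Huni_defect hz1 hV haj).clm_mul ((mapsTo_Huni_adjoint_V hz1 hV a j).clm_pow _)

include hz1 hV in
theorem wanderingProj_apply_mem_SummandA {A : Finset (Fin n)} {x : H} (hx : x ∈ HA V A)
    (k : Fin n → ℕ) : wanderingProj V (A.sort (· ≤ ·)) k x ∈ SummandA V A k := by
  obtain ⟨c, -, hc⟩ := wanderingProj_eq_smul hz1 hV (Finset.sort_nodup A (· ≤ ·)) k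
  refine ⟨c • defectProd V (A.sort (· ≤ ·)) k x,
    Submodule.smul_mem _ c (defectProd_apply_mem_WA hz1 hV hx k), ?_⟩
  rw [ContinuousLinearMap.coe_coe, map_smul, hc, smul_apply, mul_apply_eq_comp]

include hz1 hV in
theorem mapsTo_wanderingProj_Hiso {s : List (Fin n)} {a : Fin n} (ha : a ∉ s) (k : Fin n → ℕ) :
    Set.MapsTo (wanderingProj V s k) (Hiso (V a)) (Hiso (V a)) :=
  Set.MapsTo.clm_list_prod fun T hT => by
    obtain ⟨l, hl, rfl⟩ := List.mem_map.mp hT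
    have hla : l ≠ a := fun h => ha (h ▸ hl)
    exact (((mapsTo_Hiso_V hz1 hV l a).clm_pow _).clm_mul (mapsTo_Hiso_defect hz1 hV hla)).clm_mul
      ((mapsTo_Hiso_adjoint_V hz1 hV hla).clm_pow _)

include hz1 hV in
theorem mem_closure_span_wanderingProj {s : List (Fin n)} (hs : s.Nodup) {x : H}
    (hx : ∀ i ∈ s, x ∈ Hiso (V i)) :
    x ∈ (Submodule.span ℂ (Set.range fun k => wanderingProj V s k x)).topologicalClosure := by
  induction s with
  | nil =>
    exact Submodule.le_topologicalClosure _ (Submodule.subset_span ⟨0, by simp [wanderingProj]⟩)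
  | cons a t ih =>
    obtain ⟨hat, ht⟩ := List.nodup_cons.mp hs
    refine Submodule.topologicalClosure_minimal _ ?_ (Submodule.isClosed_topologicalClosure _)
      (ih ht fun i hi => hx i (List.mem_cons_of_mem a hi))
    rw [Submodule.span_le]
    rintro _ ⟨k, rfl⟩
    refine Submodule.topologicalClosure_mono (Submodule.span_le.mpr ?_)
      (mem_closure_span_of_mem_Hiso (hV.1 a)
        (mapsTo_wanderingProj_Hiso hz1 hV hat k (hx a List.mem_cons_self)))
    rintro _ ⟨m, rfl⟩
    refine Submodule.subset_span ⟨Function.update k a m, ?_⟩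
    have hrest : wanderingProj V t (Function.update k a m) = wanderingProj V t k :=
      congrArg List.prod (List.map_congr_left fun l hl => by
        rw [Function.update_of_ne (ne_of_mem_of_not_mem hl hat)])
    dsimp only
    rw [wanderingProj_cons, hrest, Function.update_self]
    simp only [mul_apply_eq_comp]

include hz1 hV in
theorem HA_le_closure_iSup_SummandA (A : Finset (Fin n)) :
    HA V A ≤ (⨆ k, SummandA V A k).topologicalClosure := by
  intro x hx
  refine Submodule.topologicalClosure_mono ?_ (mem_closure_span_wanderingProj hz1 hV
    (Finset.sort_nodup A (· ≤ ·))
    fun i hi => (mem_HA_iff.mp hx).1 i ((Finset.mem_sort (· ≤ ·)).mp hi))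
  rw [Submodule.span_le]
  rintro _ ⟨k, rfl⟩
  exact Submodule.mem_iSup_of_mem k (wanderingProj_apply_mem_SummandA hz1 hV hx k)

end DoublyNonCommuting

theorem statement13_general {n : ℕ} (z : Fin n → Fin n → ℂ)
    (hz1 : ∀ i j, i ≠ j → ‖z i j‖ = 1)
    (V : Fin n → H →L[ℂ] H) (hV : DoublyNonCommuting z V)
    (A : Finset (Fin n)) :
    WA V A ≤ HA V A ∧
    (∀ k k' : Fin n → ℕ, (∃ i ∈ A, k i ≠ k' i) →
        SummandA V A k ≤ (SummandA V A k')ᗮ) ∧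
    (⨆ k : Fin n → ℕ, SummandA V A k).topologicalClosure = HA V A ∧
    (∀ i ∉ A, Reduces (V i) (WA V A) ∧ UnitaryOn (V i) (WA V A)) ∧
    (∀ i ∉ A, ∀ j, j ∉ A → i ≠ j → ∀ x ∈ WA V A,
        adjoint (V i) (V j x) = (starRingEnd ℂ) (z i j) • V j (adjoint (V i) x)) ∧
    (∀ i ∈ A, ∀ x ∈ WA V A, adjoint (V i) x = 0) ∧
    (∀ r ∈ A, ∀ k : Fin n → ℕ,
        Submodule.map (V r : H →ₗ[ℂ] H) (SummandA V A k) =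
          SummandA V A (Function.update k r (k r + 1))) := by
  refine ⟨WA_le_HA hz1 hV A, fun k k' h => SummandA_isOrtho hz1 hV h, ?_, fun i hi => ?_, ?_,
    fun i hi x hx => adjoint_V_apply_eq_zero_of_mem_WA hz1 hV hi hx,
    fun r hr k => map_V_SummandA hz1 hV hr k⟩
  · exact le_antisymm
      (Submodule.topologicalClosure_minimal _ (iSup_le (SummandA_le_HA hz1 hV A))
        (isClosed_HA hV A))
      (HA_le_closure_iSup_SummandA hz1 hV A)
  · exact ⟨⟨fun x hx => mapsTo_WA_V hz1 hV hi hx, fun x hx => mapsTo_WA_adjoint_V hz1 hV hi hx⟩,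
      map_V_WA hz1 hV hi⟩
  · intro i _ j _ hij x _
    simpa only [mul_apply_eq_comp, smul_apply] using DFunLike.congr_fun (hV.2 i j hij) x

theorem statement13 {n : ℕ} (hn : 1 ≤ n) (z : Fin n → Fin n → ℂ)
    (hz1 : ∀ i j, i ≠ j → ‖z i j‖ = 1)
    (hz2 : ∀ i j, i ≠ j → z j i = (starRingEnd ℂ) (z i j))
    (V : Fin n → H →L[ℂ] H) (hV : DoublyNonCommuting z V)
    (A : Finset (Fin n)) :
    WA V A ≤ HA V A ∧
    (∀ k k' : Fin n → ℕ, (∃ i ∈ A, k i ≠ k' i) →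
        SummandA V A k ≤ (SummandA V A k')ᗮ) ∧
    (⨆ k : Fin n → ℕ, SummandA V A k).topologicalClosure = HA V A ∧
    (∀ i ∉ A, Reduces (V i) (WA V A) ∧ UnitaryOn (V i) (WA V A)) ∧
    (∀ i ∉ A, ∀ j, j ∉ A → i ≠ j → ∀ x ∈ WA V A,
        adjoint (V i) (V j x) = (starRingEnd ℂ) (z i j) • V j (adjoint (V i) x)) ∧
    (∀ i ∈ A, ∀ x ∈ WA V A, adjoint (V i) x = 0) ∧
    (∀ r ∈ A, ∀ k : Fin n → ℕ,
        Submodule.map (V r : H →ₗ[ℂ] H) (SummandA V A k) =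
          SummandA V A (Function.update k r (k r + 1))) :=
  statement13_general z hz1 V hV A
end
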